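/- arXiv:1103.3286 — 7 statements merged into one kernel-verified Lean document; each statement's English description precedes it below -/
import Mathlib

section
/- Let 0 < α < 1, let M > 0, and let f : (0,∞) → ℂ be measurable with t ↦ e^{-Mt} f(t) integrable on (0,∞). Then for every s ∈ ℂ with Re(s) > M, one has (s/Γ(1−α)) · ∫₀^∞ f(t) (∫₀^∞ e^{-s(t+τ)} τ^{-α} dτ) dt = s^α · ∫₀^∞ e^{-st} f(t) dt, where s^α is the principal complex power. (Proposition up1: the Laplace transform of the distributional Caputo-type fractional derivative D^α_{t,0} f equals s^α f̂(s).) -/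
/-!
Since `e^{-s(t+τ)} = e^{-st} e^{-sτ}`, the inner integral is `e^{-st}` times the Laplace
transform of `τ^{a-1}` with `a = 1 - α`, which is `Γ(a) s^{-a}`. For real `s > 0` this is
the substitution `τ ↦ τ/s` in Euler's integral; it extends to `Re s > 0` by the identity
theorem, because `s ↦ ∫₀^∞ e^{-sτ} τ^{a-1} dτ` is the complex moment generating function of
`-τ` under the measure `τ^{a-1} dτ` on `(0, ∞)`, hence holomorphic on the right half-plane.
-/

open MeasureTheory Real Set ProbabilityTheory Filter Topology

noncomputable def rpowVolumeIoi (a : ℝ) : Measure ℝ :=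
  (volume.restrict (Ioi 0)).withDensity fun τ => ENNReal.ofReal (τ ^ (a - 1))

section

variable {E : Type*} [NormedAddCommGroup E] [NormedSpace ℝ E] (a : ℝ) (g : ℝ → E)

lemma integral_rpowVolumeIoi :
    ∫ τ, g τ ∂rpowVolumeIoi a = ∫ τ in Ioi 0, τ ^ (a - 1) • g τ := by
  rw [rpowVolumeIoi, integral_withDensity_eq_integral_toReal_smul (by fun_prop)
    (ae_of_all _ fun _ => ENNReal.ofReal_lt_top)]
  refine setIntegral_congr_fun measurableSet_Ioi fun τ hτ => ?_
  rw [ENNReal.toReal_ofReal (rpow_nonneg (le_of_lt hτ) _)]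

lemma integrable_rpowVolumeIoi_iff :
    Integrable g (rpowVolumeIoi a) ↔ IntegrableOn (fun τ => τ ^ (a - 1) • g τ) (Ioi 0) := by
  rw [rpowVolumeIoi, integrable_withDensity_iff_integrable_smul' (by fun_prop)
    (ae_of_all _ fun _ => ENNReal.ofReal_lt_top)]
  refine integrableOn_congr_fun (fun τ hτ => ?_) measurableSet_Ioi
  rw [ENNReal.toReal_ofReal (rpow_nonneg (le_of_lt hτ) _)]

end

lemma Ioi_subset_interior_integrableExpSet_neg_rpowVolumeIoi {a : ℝ} (ha : 0 < a) :
    Ioi 0 ⊆ interior (integrableExpSet Neg.neg (rpowVolumeIoi a)) := by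
  refine isOpen_Ioi.subset_interior_iff.mpr fun t ht => ?_
  refine (integrable_rpowVolumeIoi_iff a _).mpr ?_
  simpa using integrableOn_rpow_mul_exp_neg_mul_rpow (p := 1) (by linarith) one_pos ht

lemma complexMGF_neg_rpowVolumeIoi_ofReal {a r : ℝ} (ha : 0 < a) (hr : 0 < r) :
    complexMGF Neg.neg (rpowVolumeIoi a) r = Complex.Gamma a * (r : ℂ) ^ (-(a : ℂ)) := by
  rw [complexMGF, integral_rpowVolumeIoi]
  convert Complex.integral_cpow_mul_exp_neg_mul_Ioi (a := a) (by simpa using ha) hr using 1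
  · refine setIntegral_congr_fun measurableSet_Ioi fun τ hτ => ?_
    simp [Complex.real_smul, Complex.ofReal_cpow (le_of_lt hτ)]
  · have harg : (r : ℂ).arg ≠ π := by simp [Complex.arg_ofReal_of_nonneg hr.le, pi_ne_zero.symm]
    rw [one_div, Complex.inv_cpow _ _ harg, ← Complex.cpow_neg, mul_comm]

lemma complexMGF_neg_rpowVolumeIoi {a : ℝ} (ha : 0 < a) {s : ℂ} (hs : 0 < s.re) :
    complexMGF Neg.neg (rpowVolumeIoi a) s = Complex.Gamma a * s ^ (-(a : ℂ)) := by
  set U : Set ℂ := {z | 0 < z.re}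
  have hmgf : AnalyticOnNhd ℂ (complexMGF Neg.neg (rpowVolumeIoi a)) U :=
    analyticOnNhd_complexMGF.mono fun z hz =>
      Ioi_subset_interior_integrableExpSet_neg_rpowVolumeIoi ha hz
  have hpow : AnalyticOnNhd ℂ (fun z : ℂ => Complex.Gamma a * z ^ (-(a : ℂ))) U :=
    DifferentiableOn.analyticOnNhd (fun z hz => ((differentiableAt_id.cpow_const
      (Or.inl hz)).const_mul _).differentiableWithinAt)
      (isOpen_lt continuous_const Complex.continuous_re)
  have hfreq : ∃ᶠ z in 𝓝[≠] (1 : ℂ),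
      complexMGF Neg.neg (rpowVolumeIoi a) z = Complex.Gamma a * z ^ (-(a : ℂ)) := by
    refine (Complex.continuous_ofReal.continuousWithinAt.tendsto_nhdsWithin
      (fun _ _ => by simp_all) : Tendsto ((↑) : ℝ → ℂ) (𝓝[≠] 1) (𝓝[≠] 1)).frequently ?_
    exact (eventually_nhdsWithin_of_eventually_nhds (eventually_gt_nhds one_pos)).frequently.mono
      fun r hr => complexMGF_neg_rpowVolumeIoi_ofReal ha hr
  exact hmgf.eqOn_of_preconnected_of_frequently_eq hpow (convex_halfSpace_re_gt 0).isPreconnected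
    (by simp [U]) hfreq hs

lemma integral_cexp_neg_mul_mul_rpow {a : ℝ} (ha : 0 < a) {s : ℂ} (hs : 0 < s.re) :
    ∫ τ in Ioi (0 : ℝ), Complex.exp (-s * τ) * ((τ ^ (a - 1) : ℝ) : ℂ)
      = Complex.Gamma a * s ^ (-(a : ℂ)) := by
  rw [← complexMGF_neg_rpowVolumeIoi ha hs, complexMGF, integral_rpowVolumeIoi]
  refine setIntegral_congr_fun measurableSet_Ioi fun τ _ => ?_
  simp [Complex.real_smul, mul_comm]

theorem laplace_fractional_derivative_general (α : ℝ) (hα1 : α < 1)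
    (M : ℝ) (hM : 0 < M) (f : ℝ → ℂ)
    (s : ℂ) (hs : M < s.re) :
    (s / (Real.Gamma (1 - α) : ℂ)) *
        ∫ t in Set.Ioi (0 : ℝ), f t *
          ∫ τ in Set.Ioi (0 : ℝ), Complex.exp (-s * (t + τ)) * ((τ ^ (-α) : ℝ) : ℂ)
      = s ^ (α : ℂ) * ∫ t in Set.Ioi (0 : ℝ), Complex.exp (-s * t) * f t := by
  have hs0 : 0 < s.re := hM.trans hs
  have hs_ne : s ≠ 0 := fun h => by simp [h] at hs0
  have hΓ : (Real.Gamma (1 - α) : ℂ) ≠ 0 :=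
    Complex.ofReal_ne_zero.mpr (Real.Gamma_pos_of_pos (by linarith)).ne'
  have hinner (t : ℝ) :
      ∫ τ in Ioi (0 : ℝ), Complex.exp (-s * (t + τ)) * ((τ ^ (-α) : ℝ) : ℂ)
        = Complex.exp (-s * t) * (Real.Gamma (1 - α) * s ^ (-((1 - α : ℝ) : ℂ))) := by
    simp_rw [mul_add, Complex.exp_add, mul_assoc, ← sub_sub_cancel_left 1 α]
    rw [integral_const_mul, integral_cexp_neg_mul_mul_rpow (by linarith) hs0, Complex.Gamma_ofReal]
  have hpow : s ^ (α : ℂ) = s * s ^ (-((1 - α : ℝ) : ℂ)) := by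
    conv_lhs => rw [show (α : ℂ) = 1 + -((1 - α : ℝ) : ℂ) by push_cast; ring]
    rw [Complex.cpow_add _ _ hs_ne, Complex.cpow_one]
  simp_rw [hinner, ← mul_assoc, mul_comm (f _), integral_mul_const, hpow]
  field_simp

/-- Proposition up1: for `f` measurable with `e^(-Mt) f(t)` integrable on `(0,∞)` and
`Re s > M`, the Laplace transform of the distributional fractional derivative
`D^α_{t,0} f` equals `s^α f̂(s)`:
`(s/Γ(1-α)) ∫₀^∞ f(t) (∫₀^∞ e^(-s(t+τ)) τ^(-α) dτ) dt = s^α ∫₀^∞ e^(-st) f(t) dt`. -/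
theorem laplace_fractional_derivative (α : ℝ) (hα0 : 0 < α) (hα1 : α < 1)
    (M : ℝ) (hM : 0 < M) (f : ℝ → ℂ) (hmeas : Measurable f)
    (hint : IntegrableOn (fun t => Real.exp (-M * t) • f t) (Set.Ioi 0))
    (s : ℂ) (hs : M < s.re) :
    (s / (Real.Gamma (1 - α) : ℂ)) *
        ∫ t in Set.Ioi (0 : ℝ), f t *
          ∫ τ in Set.Ioi (0 : ℝ), Complex.exp (-s * (t + τ)) * ((τ ^ (-α) : ℝ) : ℂ)
      = s ^ (α : ℂ) * ∫ t in Set.Ioi (0 : ℝ), Complex.exp (-s * t) * f t :=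
  laplace_fractional_derivative_general α hα1 M hM f s hs
end

section
/- Let 0 < α < 1. Then (sin(απ)/π) · ∫₀^∞ r^{α−1}/(r^{2α} + 2 r^α cos(απ) + 1) dr = 1; equivalently, W₀(0) = 1. -/
/-!
Substituting `u = r ^ α` turns the integral into `α⁻¹ ∫₀^∞ du / (u² + 2u cos θ + 1)`
with `θ = απ`. Completing the square, `u² + 2u cos θ + 1 = (u + cos θ)² + sin² θ`, so the
latter integral is `arctan((u + cos θ) / sin θ) / sin θ` taken between `0` and `∞`, that is
`(π/2 - (π/2 - θ)) / sin θ = θ / sin θ`.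
-/

open MeasureTheory Real Set Filter

lemma sq_add_two_mul_cos_add_one (u θ : ℝ) :
    u ^ 2 + 2 * u * cos θ + 1 = (u + cos θ) ^ 2 + sin θ ^ 2 := by
  linear_combination -sin_sq_add_cos_sq θ

lemma arctan_cos_div_sin {θ : ℝ} (hθ0 : 0 < θ) (hθπ : θ < π) :
    arctan (cos θ / sin θ) = π / 2 - θ := by
  refine arctan_eq_of_tan_eq ?_ ⟨by linarith, by linarith⟩
  rw [tan_eq_sin_div_cos, sin_pi_div_two_sub, cos_pi_div_two_sub]

lemma hasDerivAt_arctan_add_cos_div_sin {θ : ℝ} (hs : sin θ ≠ 0) (u : ℝ) :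
    HasDerivAt (fun u => arctan ((u + cos θ) / sin θ) / sin θ)
      (1 / (u ^ 2 + 2 * u * cos θ + 1)) u := by
  have hinner : HasDerivAt (fun u => (u + cos θ) / sin θ) (1 / sin θ) u := by
    simpa using ((hasDerivAt_id u).add_const (cos θ)).div_const (sin θ)
  refine (((hasDerivAt_arctan _).comp u hinner).div_const (sin θ)).congr_deriv ?_
  have hpos : 0 < (u + cos θ) ^ 2 + sin θ ^ 2 := by positivity
  rw [sq_add_two_mul_cos_add_one]
  field_simp
  ring

theorem integral_Ioi_one_div_sq_add_two_mul_cos_add_one {θ : ℝ} (hθ0 : 0 < θ)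
    (hθπ : θ < π) :
    ∫ u in Ioi (0 : ℝ), 1 / (u ^ 2 + 2 * u * cos θ + 1) = θ / sin θ := by
  have hs : 0 < sin θ := sin_pos_of_pos_of_lt_pi hθ0 hθπ
  have hlim : Tendsto (fun u => arctan ((u + cos θ) / sin θ) / sin θ) atTop
      (nhds ((π / 2) / sin θ)) := by
    have hatTop : Tendsto (fun u => (u + cos θ) / sin θ) atTop atTop :=
      (tendsto_atTop_add_const_right _ _ tendsto_id).atTop_div_const hs
    exact ((tendsto_arctan_atTop.mono_right nhdsWithin_le_nhds).comp hatTop).div_const _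
  rw [integral_Ioi_of_hasDerivAt_of_nonneg' (fun u _ => hasDerivAt_arctan_add_cos_div_sin hs.ne' u)
    (fun u _ => by rw [sq_add_two_mul_cos_add_one]; positivity) hlim]
  rw [zero_add, arctan_cos_div_sin hθ0 hθπ]
  ring

/-- `W₀(0) = 1`: for `0 < α < 1`,
`(sin(απ)/π) ∫₀^∞ r^(α-1)/(r^(2α) + 2 r^α cos(απ) + 1) dr = 1`. -/
theorem W0_at_zero (α : ℝ) (hα0 : 0 < α) (hα1 : α < 1) :
    (Real.sin (α * Real.pi) / Real.pi) *
        ∫ r in Set.Ioi (0 : ℝ),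
          r ^ (α - 1) / (r ^ (2 * α) + 2 * r ^ α * Real.cos (α * Real.pi) + 1)
      = 1 := by
  set θ := α * π with hθ
  have hθ0 : 0 < θ := by positivity
  have hθπ : θ < π := mul_lt_of_lt_one_left pi_pos hα1
  have hsubst : ∫ r in Ioi (0 : ℝ), r ^ (α - 1) / (r ^ (2 * α) + 2 * r ^ α * cos θ + 1)
      = α⁻¹ * ∫ r in Ioi (0 : ℝ),
          (α * r ^ (α - 1)) • (fun u => 1 / (u ^ 2 + 2 * u * cos θ + 1)) (r ^ α) := by
    rw [← integral_const_mul]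
    refine setIntegral_congr_fun measurableSet_Ioi fun r (hr : 0 < r) => ?_
    rw [smul_eq_mul, mul_comm 2 α, rpow_mul hr.le, rpow_two]
    field_simp
  rw [hsubst, integral_comp_rpow_Ioi_of_pos (g := fun u => 1 / (u ^ 2 + 2 * u * cos θ + 1)) hα0,
    integral_Ioi_one_div_sq_add_two_mul_cos_add_one hθ0 hθπ]
  have hs : sin θ ≠ 0 := (sin_pos_of_pos_of_lt_pi hθ0 hθπ).ne'
  field_simp
  rw [hθ]
  ring
end

section
/- Let 0 < α < 1. The function W₀ satisfies: (1) W₀ is nonincreasing on [0,∞); (2) 0 < W₀(t) ≤ 1 for every t ≥ 0; and (3) W₀(t) → 0 as t → +∞. -/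
open MeasureTheory Real Set Filter

/-!
Substituting `u = r ^ α` turns the density of `W₀` into `r ^ (α - 1) • (u² + 2u cos(απ) + 1)⁻¹`,
and `u ↦ (u² + 2u cos θ + 1)⁻¹` has the primitive `(sin θ)⁻¹ arctan ((u + cos θ) / sin θ)`;
this gives integrability of the density and `∫₀^∞ = π / sin(απ)`, i.e. `W₀(0) = 1`. Being a
positive multiple of the Laplace transform of a positive integrable function, `W₀` is then
positive, nonincreasing, and tends to `0` by dominated convergence.
-/

/-- The kernel `W₀(t) = (sin(απ)/π) ∫₀^∞ e^(-rt) r^(α-1)/(r^(2α)+2r^α cos(απ)+1) dr`. -/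
noncomputable def W0 (α t : ℝ) : ℝ :=
  (Real.sin (α * Real.pi) / Real.pi) *
    ∫ r in Set.Ioi (0 : ℝ),
      Real.exp (-r * t) * r ^ (α - 1) /
        (r ^ (2 * α) + 2 * r ^ α * Real.cos (α * Real.pi) + 1)

section Laplace

variable {φ : ℝ → ℝ}

lemma integrableOn_exp_neg_mul_mul (hφ : IntegrableOn φ (Ioi 0)) {t : ℝ} (ht : 0 ≤ t) :
    IntegrableOn (fun r => exp (-r * t) * φ r) (Ioi 0) := by
  refine hφ.bdd_mul (c := 1) (by fun_prop) ?_
  filter_upwards [ae_restrict_mem measurableSet_Ioi] with r (hr : 0 < r)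
  rw [norm_of_nonneg (exp_pos _).le, exp_le_one_iff]
  nlinarith

lemma antitoneOn_integral_exp_neg_mul_mul (hφ : IntegrableOn φ (Ioi 0))
    (hφ0 : ∀ r ∈ Ioi 0, 0 ≤ φ r) :
    AntitoneOn (fun t => ∫ r in Ioi 0, exp (-r * t) * φ r) (Ici 0) := by
  intro a (ha : 0 ≤ a) b _ hab
  refine setIntegral_mono_on (integrableOn_exp_neg_mul_mul hφ (ha.trans hab))
    (integrableOn_exp_neg_mul_mul hφ ha) measurableSet_Ioi fun r (hr : 0 < r) => ?_
  have : exp (-r * b) ≤ exp (-r * a) := exp_le_exp.2 (by nlinarith)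
  exact mul_le_mul_of_nonneg_right this (hφ0 r hr)

lemma integral_exp_neg_mul_mul_pos (hφ : IntegrableOn φ (Ioi 0))
    (hφ0 : ∀ r ∈ Ioi 0, 0 < φ r) {t : ℝ} (ht : 0 ≤ t) :
    0 < ∫ r in Ioi 0, exp (-r * t) * φ r := by
  have hpos : ∀ r ∈ Ioi (0 : ℝ), 0 < exp (-r * t) * φ r :=
    fun r hr => mul_pos (exp_pos _) (hφ0 r hr)
  rw [setIntegral_pos_iff_support_of_nonneg_ae
    ((ae_restrict_iff' measurableSet_Ioi).2 (ae_of_all _ fun r hr => (hpos r hr).le))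
    (integrableOn_exp_neg_mul_mul hφ ht),
    inter_eq_right.2 fun r hr => Function.mem_support.2 (hpos r hr).ne', volume_Ioi]
  exact ENNReal.zero_lt_top

lemma tendsto_integral_exp_neg_mul_mul (hφ : IntegrableOn φ (Ioi 0)) :
    Tendsto (fun t => ∫ r in Ioi 0, exp (-r * t) * φ r) atTop (nhds 0) := by
  have hlim : ∀ r ∈ Ioi (0 : ℝ), Tendsto (fun t => exp (-r * t) * φ r) atTop (nhds 0) :=
    fun r (hr : 0 < r) => by
      simpa using (tendsto_exp_atBot.comp
        (tendsto_id.const_mul_atTop_of_neg (neg_neg_of_pos hr))).mul_const (φ r)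
  have hbound : ∀ᶠ t in atTop,
      ∀ᵐ r ∂volume.restrict (Ioi 0), ‖exp (-r * t) * φ r‖ ≤ ‖φ r‖ := by
    filter_upwards [eventually_ge_atTop 0] with t ht
    filter_upwards [ae_restrict_mem measurableSet_Ioi] with r (hr : 0 < r)
    rw [norm_mul, norm_of_nonneg (exp_pos _).le]
    exact mul_le_of_le_one_left (norm_nonneg _) (exp_le_one_iff.2 (by nlinarith))
  simpa using tendsto_integral_filter_of_dominated_convergence (fun r => ‖φ r‖)
    (Eventually.of_forall fun t => (by fun_prop : Continuous fun r => exp (-r * t))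
      |>.aestronglyMeasurable.mul hφ.aestronglyMeasurable) hbound hφ.norm
    ((ae_restrict_iff' measurableSet_Ioi).2 (ae_of_all _ hlim))

end Laplace

section ArctanIntegral

variable {θ : ℝ}

lemma sin_sq_le_sq_add_two_mul_cos_add_one (θ u : ℝ) :
    sin θ ^ 2 ≤ u ^ 2 + 2 * u * cos θ + 1 := by
  nlinarith [sin_sq_add_cos_sq θ, sq_nonneg (u + cos θ)]

lemma sq_add_two_mul_cos_add_one_pos (hθ : sin θ ≠ 0) (u : ℝ) :
    0 < u ^ 2 + 2 * u * cos θ + 1 := by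
  have : 0 < sin θ ^ 2 := by positivity
  exact this.trans_le (sin_sq_le_sq_add_two_mul_cos_add_one θ u)

lemma hasDerivAt_inv_sin_mul_arctan (hθ : sin θ ≠ 0) (u : ℝ) :
    HasDerivAt (fun u => (sin θ)⁻¹ * arctan ((u + cos θ) / sin θ))
      (u ^ 2 + 2 * u * cos θ + 1)⁻¹ u := by
  have hq := sq_add_two_mul_cos_add_one_pos hθ u
  have h := (((hasDerivAt_id' u).add_const (cos θ)).div_const (sin θ)).arctan.const_mul
    (sin θ)⁻¹
  refine h.congr_deriv ?_
  field_simp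
  rw [eq_div_iff (by linarith)]
  linear_combination -sin_sq_add_cos_sq θ

lemma tendsto_inv_sin_mul_arctan (hθ : 0 < sin θ) :
    Tendsto (fun u => (sin θ)⁻¹ * arctan ((u + cos θ) / sin θ)) atTop
      (nhds ((sin θ)⁻¹ * (π / 2))) :=
  ((tendsto_nhds_of_tendsto_nhdsWithin tendsto_arctan_atTop).comp
    ((tendsto_atTop_add_const_right atTop _ tendsto_id).atTop_div_const hθ)).const_mul _

lemma integrableOn_inv_sq_add_two_mul_cos_add_one (hθ : 0 < sin θ) :
    IntegrableOn (fun u => (u ^ 2 + 2 * u * cos θ + 1)⁻¹) (Ioi 0) :=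
  integrableOn_Ioi_deriv_of_nonneg' (fun u _ => hasDerivAt_inv_sin_mul_arctan hθ.ne' u)
    (fun u _ => (inv_pos.2 (sq_add_two_mul_cos_add_one_pos hθ.ne' u)).le)
    (tendsto_inv_sin_mul_arctan hθ)

lemma integral_inv_sq_add_two_mul_cos_add_one (hθ0 : 0 < θ) (hθπ : θ < π) :
    ∫ u in Ioi 0, (u ^ 2 + 2 * u * cos θ + 1)⁻¹ = θ / sin θ := by
  have hs := sin_pos_of_pos_of_lt_pi hθ0 hθπ
  have harctan : arctan (cos θ / sin θ) = π / 2 - θ := by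
    rw [← cos_pi_div_two_sub, ← sin_pi_div_two_sub, ← tan_eq_sin_div_cos,
      arctan_tan (by linarith) (by linarith)]
  rw [integral_Ioi_of_hasDerivAt_of_nonneg' (fun u _ => hasDerivAt_inv_sin_mul_arctan hs.ne' u)
    (fun u _ => (inv_pos.2 (sq_add_two_mul_cos_add_one_pos hs.ne' u)).le)
    (tendsto_inv_sin_mul_arctan hs)]
  simp only [zero_add, harctan]
  field_simp
  ring

end ArctanIntegral

section W0

variable {α : ℝ}

noncomputable def W0Density (α r : ℝ) : ℝ :=
  r ^ (α - 1) / (r ^ (2 * α) + 2 * r ^ α * cos (α * π) + 1)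

lemma W0_eq_mul_integral (α t : ℝ) :
    W0 α t = sin (α * π) / π * ∫ r in Ioi 0, exp (-r * t) * W0Density α r := by
  simp only [W0, W0Density, mul_div_assoc]

lemma sin_mul_pi_pos (hα0 : 0 < α) (hα1 : α < 1) : 0 < sin (α * π) :=
  sin_pos_of_pos_of_lt_pi (by positivity) (by nlinarith [pi_pos])

lemma W0Density_eq_rpow_smul {r : ℝ} (hr : 0 ≤ r) :
    W0Density α r = r ^ (α - 1) • ((r ^ α) ^ 2 + 2 * r ^ α * cos (α * π) + 1)⁻¹ := by
  rw [W0Density, smul_eq_mul, div_eq_mul_inv, ← rpow_mul_natCast hr, Nat.cast_ofNat,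
    mul_comm α 2]

lemma W0Density_pos (hα0 : 0 < α) (hα1 : α < 1) {r : ℝ} (hr : 0 < r) :
    0 < W0Density α r := by
  rw [W0Density_eq_rpow_smul hr.le]
  exact smul_pos (rpow_pos_of_pos hr _)
    (inv_pos.2 (sq_add_two_mul_cos_add_one_pos (sin_mul_pi_pos hα0 hα1).ne' _))

lemma integrableOn_W0Density (hα0 : 0 < α) (hα1 : α < 1) :
    IntegrableOn (W0Density α) (Ioi 0) :=
  ((integrableOn_Ioi_comp_rpow_iff' _ hα0.ne').2
    (integrableOn_inv_sq_add_two_mul_cos_add_one (sin_mul_pi_pos hα0 hα1))).congr_fun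
    (fun _ hr => (W0Density_eq_rpow_smul (le_of_lt hr)).symm) measurableSet_Ioi

lemma integral_W0Density (hα0 : 0 < α) (hα1 : α < 1) :
    ∫ r in Ioi 0, W0Density α r = π / sin (α * π) := by
  have hs := sin_mul_pi_pos hα0 hα1
  calc ∫ r in Ioi 0, W0Density α r
      = α⁻¹ * ∫ r in Ioi 0, (α * r ^ (α - 1)) •
          ((r ^ α) ^ 2 + 2 * r ^ α * cos (α * π) + 1)⁻¹ := by
        rw [← integral_const_mul]
        refine setIntegral_congr_fun measurableSet_Ioi fun r (hr : 0 < r) => ?_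
        rw [W0Density_eq_rpow_smul hr.le, mul_smul, smul_eq_mul, smul_eq_mul,
          inv_mul_cancel_left₀ hα0.ne']
    _ = α⁻¹ * (α * π / sin (α * π)) := by
        rw [integral_comp_rpow_Ioi_of_pos
            (g := fun u => (u ^ 2 + 2 * u * cos (α * π) + 1)⁻¹) hα0,
          integral_inv_sq_add_two_mul_cos_add_one (by positivity) (by nlinarith [pi_pos])]
    _ = π / sin (α * π) := by field_simp

lemma W0_zero (hα0 : 0 < α) (hα1 : α < 1) : W0 α 0 = 1 := by
  have hs := sin_mul_pi_pos hα0 hα1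
  simp only [W0_eq_mul_integral, mul_zero, exp_zero, one_mul, integral_W0Density hα0 hα1]
  field_simp

end W0

/-- For `0 < α < 1`: `W₀` is nonincreasing on `[0,∞)`, satisfies `0 < W₀(t) ≤ 1` for
all `t ≥ 0`, and tends to `0` as `t → +∞`. -/
theorem W0_properties (α : ℝ) (hα0 : 0 < α) (hα1 : α < 1) :
    AntitoneOn (W0 α) (Set.Ici 0) ∧
      (∀ t ≥ (0 : ℝ), 0 < W0 α t ∧ W0 α t ≤ 1) ∧
      Tendsto (W0 α) atTop (nhds 0) := by
  have hφ := integrableOn_W0Density hα0 hα1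
  have hφ_pos : ∀ r ∈ Ioi 0, 0 < W0Density α r := fun _ hr => W0Density_pos hα0 hα1 hr
  have hc : 0 < sin (α * π) / π := div_pos (sin_mul_pi_pos hα0 hα1) pi_pos
  have hanti : AntitoneOn (W0 α) (Ici 0) := fun a ha b hb hab => by
    simp only [W0_eq_mul_integral]
    exact mul_le_mul_of_nonneg_left
      (antitoneOn_integral_exp_neg_mul_mul hφ (fun r hr => (hφ_pos r hr).le) ha hb hab) hc.le
  refine ⟨hanti, fun t ht => ⟨?_, ?_⟩, ?_⟩
  · rw [W0_eq_mul_integral]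
    exact mul_pos hc (integral_exp_neg_mul_mul_pos hφ hφ_pos ht)
  · simpa only [W0_zero hα0 hα1] using hanti self_mem_Ici ht ht
  · rw [funext (W0_eq_mul_integral α)]
    simpa only [mul_zero] using
      (tendsto_integral_exp_neg_mul_mul hφ).const_mul (sin (α * π) / π)
end

section
/- Let 0 < α < β < 1 and δ = β − α. Set K = sin(πβ/2) − sin(πα/2); then K > 0 and for every μ > 0 and every real y with 0 < y ≤ μ^{1/(2−δ)}, one has |μ + (iy)^{2−δ} + (iy)^{2−β}| ≥ K·μ, where the powers (iy)^{2−δ} and (iy)^{2−β} are principal complex powers. -/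
/-!
Multiply `z = μ + (iy)^(2-δ) + (iy)^(2-β)` by the unit `e^{i(πδ/2 - π/2)}`. Since
`(iy)^γ = y^γ e^{iπγ/2}`, the middle term becomes purely imaginary, while `μ` and the last term
get the real parts `μ sin(πδ/2)` and `y^(2-β) sin(πα/2) ≥ 0`. Hence
`‖z‖ ≥ μ sin(πδ/2) ≥ (sin(πβ/2) - sin(πα/2)) μ`, the last step by the addition formula for
`sin(πα/2 + πδ/2)`.
-/

open Complex Real

namespace Complex

theorem I_mul_ofReal_cpow_ofReal {y : ℝ} (hy : 0 < y) (γ : ℝ) :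
    (I * y) ^ (γ : ℂ) = ((y ^ γ : ℝ) : ℂ) * exp ((π * γ / 2 : ℝ) * I) := by
  rw [cpow_def_of_ne_zero (by simp [hy.ne']), log_mul_ofReal y hy I I_ne_zero, log_I,
    add_mul, exp_add, rpow_def_of_pos hy, ofReal_exp]
  push_cast
  ring_nf

theorem re_exp_mul_I_mul_ofReal_mul_exp (ψ a θ : ℝ) :
    (exp (ψ * I) * (a * exp (θ * I))).re = a * Real.cos (ψ + θ) := by
  rw [mul_left_comm, ← exp_add, ← add_mul, ← ofReal_add, re_ofReal_mul, exp_ofReal_mul_I_re]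

theorem re_exp_mul_I_mul_I_mul_ofReal_cpow {y : ℝ} (hy : 0 < y) (ψ γ : ℝ) :
    (exp (ψ * I) * (I * y) ^ (γ : ℂ)).re = y ^ γ * Real.cos (ψ + π * γ / 2) := by
  rw [I_mul_ofReal_cpow_ofReal hy, re_exp_mul_I_mul_ofReal_mul_exp]

theorem re_exp_mul_I_mul_ofReal (ψ a : ℝ) : (exp (ψ * I) * a).re = a * Real.cos ψ := by
  rw [mul_comm, re_ofReal_mul, exp_ofReal_mul_I_re]

theorem re_exp_mul_I_mul_le_norm (ψ : ℝ) (z : ℂ) : (exp (ψ * I) * z).re ≤ ‖z‖ := by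
  simpa [norm_mul, norm_exp_ofReal_mul_I] using re_le_norm (exp (ψ * I) * z)

end Complex

namespace Real

theorem sin_sub_sin_le_sin_sub {a b : ℝ} (ha : 0 ≤ sin a) (hba : 0 ≤ sin (b - a)) :
    sin b - sin a ≤ sin (b - a) := by
  have hb : sin b = sin a * cos (b - a) + cos a * sin (b - a) := by
    rw [← sin_add, add_sub_cancel]
  nlinarith [mul_le_of_le_one_right ha (cos_le_one (b - a)),
    mul_le_of_le_one_left hba (cos_le_one a)]

end Real

theorem re_exp_mul_I_mul_ofReal_add_cpow_add_cpow {α β δ : ℝ} (hδ : δ = β - α) (μ : ℝ) {y : ℝ}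
    (hy : 0 < y) :
    (exp ((π * δ / 2 - π / 2 : ℝ) * I) *
        ((μ : ℂ) + (I * y) ^ ((2 : ℂ) - (δ : ℂ)) + (I * y) ^ ((2 : ℂ) - (β : ℂ)))).re =
      μ * Real.sin (π * δ / 2) + y ^ (2 - β) * Real.sin (π * α / 2) := by
  have hcast (γ : ℝ) : (2 : ℂ) - (γ : ℂ) = ((2 - γ : ℝ) : ℂ) := by push_cast; ring
  rw [hcast, hcast, mul_add, mul_add, add_re, add_re, re_exp_mul_I_mul_ofReal,
    re_exp_mul_I_mul_I_mul_ofReal_cpow hy, re_exp_mul_I_mul_I_mul_ofReal_cpow hy,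
    show π * δ / 2 - π / 2 = -(π / 2 - π * δ / 2) by ring,
    show -(π / 2 - π * δ / 2) + π * (2 - δ) / 2 = π / 2 by ring,
    show -(π / 2 - π * δ / 2) + π * (2 - β) / 2 = π / 2 - π * α / 2 by rw [hδ]; ring,
    Real.cos_neg, Real.cos_pi_div_two_sub, Real.cos_pi_div_two, Real.cos_pi_div_two_sub]
  ring

/-- Estimate (sol7): with `K = sin(πβ/2) - sin(πα/2) > 0`, for every `μ > 0` and
`0 < y ≤ μ^(1/(2-δ))`, one has `|μ + (iy)^(2-δ) + (iy)^(2-β)| ≥ K·μ`. -/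
theorem lower_bound_small_y (α β δ : ℝ) (hα : 0 < α) (hαβ : α < β) (hβ : β < 1)
    (hδ : δ = β - α) :
    0 < Real.sin (Real.pi * β / 2) - Real.sin (Real.pi * α / 2) ∧
      ∀ μ : ℝ, 0 < μ → ∀ y : ℝ, 0 < y → y ≤ μ ^ ((1 : ℝ) / (2 - δ)) →
        (Real.sin (Real.pi * β / 2) - Real.sin (Real.pi * α / 2)) * μ ≤
          ‖(μ : ℂ) + (Complex.I * y) ^ ((2 : ℂ) - (δ : ℂ))
            + (Complex.I * y) ^ ((2 : ℂ) - (β : ℂ))‖ := by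
  have hπ := pi_pos
  have hsin_α : 0 ≤ Real.sin (π * α / 2) := Real.sin_nonneg_of_nonneg_of_le_pi (by positivity)
    (by nlinarith)
  have hsin_δ : 0 ≤ Real.sin (π * β / 2 - π * α / 2) :=
    Real.sin_nonneg_of_nonneg_of_le_pi (by nlinarith) (by nlinarith)
  have hangle : π * β / 2 - π * α / 2 = π * δ / 2 := by rw [hδ]; ring
  refine ⟨sub_pos.2 (Real.sin_lt_sin_of_lt_of_le_pi_div_two (by nlinarith) (by nlinarith)
    (by nlinarith)), fun μ hμ y hy _ => ?_⟩
  calc (Real.sin (π * β / 2) - Real.sin (π * α / 2)) * μ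
      ≤ Real.sin (π * δ / 2) * μ :=
        mul_le_mul_of_nonneg_right (hangle ▸ Real.sin_sub_sin_le_sin_sub hsin_α hsin_δ) hμ.le
    _ ≤ μ * Real.sin (π * δ / 2) + y ^ (2 - β) * Real.sin (π * α / 2) := by
        linarith [mul_nonneg (rpow_nonneg hy.le (2 - β)) hsin_α]
    _ = _ := (re_exp_mul_I_mul_ofReal_add_cpow_add_cpow hδ μ hy).symm
    _ ≤ _ := re_exp_mul_I_mul_le_norm _ _
end

section
/- Let 0 < α < β < 1 and δ = β − α. For every μ₀ > 0 there exists M > 0 such that for every μ ≥ μ₀, ∫_{-∞}^{+∞} |T_μ(iy) · w(iy)| dy ≤ M · μ^{−1/(2−δ)}. (Lemma sol5.) -/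
/-!
On the imaginary axis the factor `s ^ α + 1` cancels, leaving
`|T_μ(iy) w(iy)| = |y| ^ (-δ) / |(iy) ^ (2 - δ) + (iy) ^ (2 - β) + μ|`. For `y > 0` both powers
have arguments in `(0, π)`, so the imaginary part of the denominator controls `|y| ^ (2 - δ)`
while its real part is at least `μ` minus their moduli; hence the denominator is comparable to
`μ + |y| ^ (2 - δ)`. Negative `y` reduce to positive ones by complex conjugation. The majorant
`|y| ^ (-δ) / (μ + |y| ^ (2 - δ))` behaves like `|y| ^ (-δ)` near `0` and like `|y| ^ (-2)` at
infinity, so it is integrable, and the substitution `y = μ ^ (1 / (2 - δ)) t` shows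
that its integral is a constant times `μ ^ (-1 / (2 - δ))`.
-/

open Complex Real MeasureTheory Set ComplexConjugate

lemma le_norm_of_sub_le_re_of_mul_le_im {z : ℂ} {μ X s : ℝ} (hs₀ : 0 ≤ s) (hs₁ : s ≤ 1)
    (hX : 0 ≤ X) (hre : μ - X ≤ z.re) (him : s * X ≤ z.im) : s / 4 * (μ + X) ≤ ‖z‖ := by
  have := re_le_norm z
  have := im_le_norm z
  rcases le_or_gt X (μ / 2) with h | h <;> nlinarith

lemma MeasureTheory.IntegrableOn.comp_abs {E : Type*} [NormedAddCommGroup E] {f : ℝ → E}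
    (hf : IntegrableOn f (Ioi 0)) : Integrable (fun x => f |x|) := by
  have hIoi : IntegrableOn (fun x => f |x|) (Ioi 0) :=
    hf.congr_fun (fun x hx => by rw [abs_of_pos hx]) measurableSet_Ioi
  have hIic : IntegrableOn (fun x => f |x|) (Iic 0) := by
    have hneg : MeasurableEmbedding fun x : ℝ => -x := (Homeomorph.neg ℝ).measurableEmbedding
    rw [← Measure.map_neg_eq_self (volume : Measure ℝ), hneg.integrableOn_map_iff]
    simp_rw [Function.comp_def, abs_neg, neg_preimage, neg_Iic, neg_zero]
    exact Iff.mpr integrableOn_Ici_iff_integrableOn_Ioi hIoi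
  simpa only [Iic_union_Ioi, integrableOn_univ] using hIic.union hIoi

section Kernel

noncomputable def rpowKernel (a b μ y : ℝ) : ℝ := |y| ^ (-a) / (μ + |y| ^ b)

lemma integrableOn_Ioi_rpow_neg_div_one_add_rpow {a b : ℝ} (ha : a < 1) (hab : 1 < a + b) :
    IntegrableOn (fun t : ℝ => t ^ (-a) / (1 + t ^ b)) (Ioi 0) := by
  have hmeas : AEStronglyMeasurable (fun t : ℝ => t ^ (-a) / (1 + t ^ b)) :=
    (by fun_prop : Measurable _).aestronglyMeasurable
  rw [← Ioc_union_Ioi_eq_Ioi zero_le_one]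
  refine IntegrableOn.union ?_ ?_
  · have hdom : IntegrableOn (fun t : ℝ => t ^ (-a)) (Ioc 0 1) :=
      (intervalIntegrable_iff_integrableOn_Ioc_of_le zero_le_one).mp
        (intervalIntegral.intervalIntegrable_rpow' (by linarith))
    refine hdom.mono' hmeas.restrict ((ae_restrict_iff' measurableSet_Ioc).mpr
      (Filter.Eventually.of_forall fun t ht => ?_))
    have ht₀ : 0 < t := ht.1
    have : 0 ≤ t ^ b := by positivity
    rw [Real.norm_of_nonneg (by positivity)]
    exact div_le_self (by positivity) (by linarith)
  · have hdom : IntegrableOn (fun t : ℝ => t ^ (-(a + b))) (Ioi 1) :=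
      integrableOn_Ioi_rpow_of_lt (by linarith) zero_lt_one
    refine hdom.mono' hmeas.restrict ((ae_restrict_iff' measurableSet_Ioi).mpr
      (Filter.Eventually.of_forall fun t (ht : 1 < t) => ?_))
    have ht₀ : 0 < t := zero_lt_one.trans ht
    rw [Real.norm_of_nonneg (by positivity), neg_add, rpow_add ht₀, rpow_neg ht₀.le b,
      ← div_eq_mul_inv]
    gcongr
    linarith

lemma integrable_rpowKernel_one {a b : ℝ} (ha : a < 1) (hab : 1 < a + b) :
    Integrable (rpowKernel a b 1) :=
  (integrableOn_Ioi_rpow_neg_div_one_add_rpow ha hab).comp_abs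

lemma rpowKernel_rpow_eq (a b : ℝ) {c : ℝ} (hc : 0 < c) (y : ℝ) :
    rpowKernel a b (c ^ b) y = c ^ (-(a + b)) * rpowKernel a b 1 (c⁻¹ * y) := by
  have hy : 0 ≤ |y| := abs_nonneg y
  simp only [rpowKernel, abs_mul, abs_inv, abs_of_pos hc, mul_rpow (inv_nonneg.mpr hc.le) hy,
    inv_rpow hc.le, rpow_neg hc.le, rpow_neg hy, neg_add, rpow_add hc]
  have : 0 < c ^ a := by positivity
  have : 0 < c ^ b := by positivity
  have : 0 ≤ |y| ^ b := by positivity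
  field_simp

lemma integrable_rpowKernel_rpow {a b c : ℝ} (ha : a < 1) (hab : 1 < a + b) (hc : 0 < c) :
    Integrable (rpowKernel a b (c ^ b)) := by
  simp_rw [funext (rpowKernel_rpow_eq a b hc)]
  exact ((integrable_rpowKernel_one ha hab).comp_mul_left' (inv_ne_zero hc.ne')).const_mul _

lemma integral_rpowKernel_rpow (a b : ℝ) {c : ℝ} (hc : 0 < c) :
    ∫ y, rpowKernel a b (c ^ b) y = c ^ (1 - (a + b)) * ∫ y, rpowKernel a b 1 y := by
  simp_rw [rpowKernel_rpow_eq a b hc, integral_const_mul]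
  rw [Measure.integral_comp_mul_left, inv_inv, abs_of_pos hc, smul_eq_mul, ← mul_assoc,
    ← rpow_add_one hc.ne']
  ring_nf

end Kernel

section ImaginaryAxis

lemma sin_pi_div_two_mul_pos {c : ℝ} (h₀ : 0 < c) (h₂ : c < 2) : 0 < Real.sin (π / 2 * c) :=
  Real.sin_pos_of_pos_of_lt_pi (by positivity) (by nlinarith [pi_pos])

lemma arg_I_mul_ofReal_ne_pi (y : ℝ) : (I * y).arg ≠ π := by
  simp [arg_eq_pi_iff]

lemma arg_I_mul_ofReal {y : ℝ} (hy : 0 < y) : (I * y).arg = π / 2 := by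
  rw [arg_eq_pi_div_two_iff]; simp [hy]

lemma I_mul_ofReal_cpow_re {y : ℝ} (hy : 0 < y) (c : ℝ) :
    ((I * y) ^ (c : ℂ)).re = y ^ c * Real.cos (π / 2 * c) := by
  rw [cpow_ofReal_re, arg_I_mul_ofReal hy]; simp [abs_of_pos hy]

lemma I_mul_ofReal_cpow_im {y : ℝ} (hy : 0 < y) (c : ℝ) :
    ((I * y) ^ (c : ℂ)).im = y ^ c * Real.sin (π / 2 * c) := by
  rw [cpow_ofReal_im, arg_I_mul_ofReal hy]; simp [abs_of_pos hy]

lemma norm_I_mul_ofReal_cpow (y c : ℝ) : ‖(I * y) ^ (c : ℂ)‖ = |y| ^ c := by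
  simp [norm_cpow_real]

end ImaginaryAxis

section TransferFunction

noncomputable def Tmu (α β μ : ℝ) (s : ℂ) : ℂ :=
  s ^ ((1 : ℂ) - (β : ℂ)) * (s ^ (α : ℂ) + 1) /
    (s ^ ((2 : ℂ) - (β : ℂ)) * (s ^ (α : ℂ) + 1) + (μ : ℂ))

noncomputable def w (α : ℝ) (s : ℂ) : ℂ := 1 / (s ^ ((1 : ℂ) - (α : ℂ)) * (s ^ (α : ℂ) + 1))

lemma Tmu_conj (α β μ : ℝ) {s : ℂ} (hs : s.arg ≠ π) :
    Tmu α β μ (conj s) = conj (Tmu α β μ s) := by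
  simp [Tmu, conj_cpow _ _ hs, map_ofNat]

lemma w_conj (α : ℝ) {s : ℂ} (hs : s.arg ≠ π) : w α (conj s) = conj (w α s) := by
  simp [w, conj_cpow _ _ hs]

lemma norm_Tmu_mul_w_neg (α β μ y : ℝ) :
    ‖Tmu α β μ (I * ↑(-y)) * w α (I * ↑(-y))‖ = ‖Tmu α β μ (I * y) * w α (I * y)‖ := by
  have h : I * ↑(-y) = conj (I * y) := by simp
  rw [h, Tmu_conj _ _ _ (arg_I_mul_ofReal_ne_pi y), w_conj _ (arg_I_mul_ofReal_ne_pi y),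
    ← map_mul, norm_conj]

lemma Tmu_denom_eq {z : ℂ} (hz : z ≠ 0) (α β μ : ℝ) :
    z ^ ((2 : ℂ) - (β : ℂ)) * (z ^ (α : ℂ) + 1) + (μ : ℂ) =
      z ^ ((2 - (β - α) : ℝ) : ℂ) + z ^ ((2 - β : ℝ) : ℂ) + μ := by
  rw [mul_add, mul_one, ← cpow_add _ _ hz]
  push_cast
  ring_nf

lemma norm_Tmu_mul_w_of_pos {α β μ y : ℝ} (hα₀ : 0 < α) (hα₂ : α < 2) (hy : 0 < y) :
    ‖Tmu α β μ (I * y) * w α (I * y)‖ =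
      y ^ (-(β - α)) / ‖(I * y) ^ ((2 - (β - α) : ℝ) : ℂ) + (I * y) ^ ((2 - β : ℝ) : ℂ) + μ‖ := by
  set z : ℂ := I * y
  have hz : z ≠ 0 := by simp [z, hy.ne']
  have hB : z ^ (α : ℂ) + 1 ≠ 0 := by
    refine ne_of_apply_ne im (ne_of_gt ?_)
    have := sin_pi_div_two_mul_pos hα₀ hα₂
    simp only [add_im, one_im, add_zero, z, I_mul_ofReal_cpow_im hy, zero_im]
    positivity
  have hpow (c : ℝ) : ‖z ^ ((1 : ℂ) - (c : ℂ))‖ = y ^ (1 - c) := by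
    rw [show (1 : ℂ) - c = ((1 - c : ℝ) : ℂ) by push_cast; ring, norm_I_mul_ofReal_cpow,
      abs_of_pos hy]
  have hsplit : y ^ (1 - β) = y ^ (-(β - α)) * y ^ (1 - α) := by
    rw [← rpow_add hy]; ring_nf
  simp only [Tmu, w, Tmu_denom_eq hz, norm_mul, norm_div, norm_one, hpow, hsplit]
  have : 0 < y ^ (1 - α) := by positivity
  have : ‖z ^ (α : ℂ) + 1‖ ≠ 0 := norm_ne_zero_iff.mpr hB
  field_simp

lemma exists_norm_Tmu_mul_w_le {α β : ℝ} (hα : 0 < α) (hαβ : α < β) (hβ : β < 2) :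
    ∃ C > 0, ∀ μ : ℝ, 0 ≤ μ → ∀ y : ℝ, y ≠ 0 →
      ‖Tmu α β μ (I * y) * w α (I * y)‖ ≤ C * rpowKernel (β - α) (2 - (β - α)) μ y := by
  set s := min (Real.sin (π / 2 * (2 - (β - α)))) (Real.sin (π / 2 * (2 - β)))
  have hs₀ : 0 < s := lt_min (sin_pi_div_two_mul_pos (by linarith) (by linarith))
    (sin_pi_div_two_mul_pos (by linarith) (by linarith))
  have hs₁ : s ≤ 1 := (min_le_right _ _).trans (Real.sin_le_one _)
  have bound_of_pos {μ y : ℝ} (hμ : 0 ≤ μ) (hy : 0 < y) :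
      ‖Tmu α β μ (I * y) * w α (I * y)‖ ≤ 4 / s * (y ^ (-(β - α)) / (μ + y ^ (2 - (β - α)))) := by
    set D := (I * y) ^ ((2 - (β - α) : ℝ) : ℂ) + (I * y) ^ ((2 - β : ℝ) : ℂ) + μ
    have hp₁ : 0 < y ^ (2 - (β - α)) := by positivity
    have hp₂ : 0 < y ^ (2 - β) := by positivity
    have hD : s / 4 * (μ + (y ^ (2 - (β - α)) + y ^ (2 - β))) ≤ ‖D‖ := by
      refine le_norm_of_sub_le_re_of_mul_le_im hs₀.le hs₁ (by positivity) ?_ ?_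
      · simp only [D, add_re, ofReal_re, I_mul_ofReal_cpow_re hy]
        nlinarith [Real.neg_one_le_cos (π / 2 * (2 - (β - α))),
          Real.neg_one_le_cos (π / 2 * (2 - β))]
      · simp only [D, add_im, ofReal_im, add_zero, I_mul_ofReal_cpow_im hy]
        nlinarith [min_le_left (Real.sin (π / 2 * (2 - (β - α)))) (Real.sin (π / 2 * (2 - β))),
          min_le_right (Real.sin (π / 2 * (2 - (β - α)))) (Real.sin (π / 2 * (2 - β)))]
    calc ‖Tmu α β μ (I * y) * w α (I * y)‖ = y ^ (-(β - α)) / ‖D‖ :=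
          norm_Tmu_mul_w_of_pos hα (by linarith) hy
      _ ≤ y ^ (-(β - α)) / (s / 4 * (μ + y ^ (2 - (β - α)))) := by gcongr; nlinarith
      _ = 4 / s * (y ^ (-(β - α)) / (μ + y ^ (2 - (β - α)))) := by field_simp
  refine ⟨4 / s, by positivity, fun μ hμ y hy => ?_⟩
  rcases hy.lt_or_gt with hneg | hpos
  · have h := bound_of_pos hμ (neg_pos.mpr hneg)
    rwa [norm_Tmu_mul_w_neg, ← abs_of_neg hneg] at h
  · simpa only [rpowKernel, abs_of_pos hpos] using bound_of_pos hμ hpos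

end TransferFunction

/-- Lemma sol5: for every `μ₀ > 0` there is `M > 0` such that for all `μ ≥ μ₀`,
`∫_{-∞}^{∞} |T_μ(iy) w(iy)| dy ≤ M μ^(-1/(2-δ))`, where
`T_μ(s) = s^(1-β)(s^α+1)/(s^(2-β)(s^α+1)+μ)` and `w(s) = 1/(s^(1-α)(s^α+1))`. -/
theorem integral_Tmu_w_bound (α β δ : ℝ) (hα : 0 < α) (hαβ : α < β) (hβ : β < 1)
    (hδ : δ = β - α) (μ₀ : ℝ) (hμ₀ : 0 < μ₀) :
    ∃ M > 0, ∀ μ : ℝ, μ₀ ≤ μ →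
      (∫ y : ℝ, Norm.norm
          (((Complex.I * y) ^ ((1 : ℂ) - (β : ℂ)) * ((Complex.I * y) ^ (α : ℂ) + 1) /
              ((Complex.I * y) ^ ((2 : ℂ) - (β : ℂ)) * ((Complex.I * y) ^ (α : ℂ) + 1) + (μ : ℂ))) *
            (1 / ((Complex.I * y) ^ ((1 : ℂ) - (α : ℂ)) * ((Complex.I * y) ^ (α : ℂ) + 1)))))
        ≤ M * μ ^ (-(1 : ℝ) / (2 - δ)) := by
  subst hδ
  obtain ⟨C, hC, hbound⟩ := exists_norm_Tmu_mul_w_le hα hαβ (by linarith)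
  set I₀ := ∫ y, rpowKernel (β - α) (2 - (β - α)) 1 y
  have hI₀ : 0 ≤ I₀ := integral_nonneg fun y => by unfold rpowKernel; positivity
  refine ⟨C * (I₀ + 1), by positivity, fun μ hμ => ?_⟩
  have hμ0 : 0 < μ := hμ₀.trans_le hμ
  set c := μ ^ (2 - (β - α))⁻¹
  have hc : 0 < c := by positivity
  have hcμ : c ^ (2 - (β - α)) = μ := rpow_inv_rpow hμ0.le (by linarith)
  have hc_pow : c ^ (1 - ((β - α) + (2 - (β - α)))) = μ ^ (-(1 : ℝ) / (2 - (β - α))) := by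
    rw [← rpow_mul hμ0.le]; ring_nf
  have hK : Integrable (rpowKernel (β - α) (2 - (β - α)) μ) :=
    hcμ ▸ integrable_rpowKernel_rpow (by linarith) (by linarith) hc
  have hK_integral : ∫ y, rpowKernel (β - α) (2 - (β - α)) μ y =
      μ ^ (-(1 : ℝ) / (2 - (β - α))) * I₀ := by
    rw [← hc_pow, ← integral_rpowKernel_rpow _ _ hc, hcμ]
  calc ∫ y : ℝ, ‖Tmu α β μ (I * y) * w α (I * y)‖
      ≤ ∫ y, C * rpowKernel (β - α) (2 - (β - α)) μ y :=
        integral_mono_of_nonneg (.of_forall fun _ => norm_nonneg _) (hK.const_mul C)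
          ((Measure.ae_ne volume 0).mono fun y hy => hbound μ hμ0.le y hy)
    _ = C * I₀ * μ ^ (-(1 : ℝ) / (2 - (β - α))) := by rw [integral_const_mul, hK_integral]; ring
    _ ≤ C * (I₀ + 1) * μ ^ (-(1 : ℝ) / (2 - (β - α))) := by gcongr; linarith
end

section
/- Let h : (0,∞) → ℂ be measurable with t ↦ e^{-Mt} h(t) integrable on (0,∞) for some M > 0. If there exists s₀ > M such that ∫₀^∞ e^{-st} h(t) dt = 0 for every real s ≥ s₀, then h(t) = 0 for almost every t > 0. (Injectivity of the Laplace transform on exponentially weighted L¹, used to prove uniqueness in Proposition up2 and Corollary uc1.) -/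
/-! Put `g t = e^{-s₀ t} h t`, which is integrable on `(0,∞)` and has vanishing moments
`∫ (e^{-t})ⁿ g(t) dt` for all `n : ℕ`. By the Weierstrass approximation theorem,
`∫ F(e^{-t}) g(t) dt = 0` for every `F` continuous on `[0,1]`. A continuous `φ` vanishing at `+∞`
is of this form, with `F x = φ (-log x)` and `F 0 = 0`; in particular every compactly supported
smooth `φ` integrates `g` to zero, so `g`, and with it `h`, vanishes almost everywhere. -/

open MeasureTheory Real Set Filter Topology Polynomial

variable {E : Type*} [NormedAddCommGroup E] [NormedSpace ℝ E] {g : ℝ → E}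

lemma integrableOn_exp_neg_mul_smul (hg : IntegrableOn g (Ioi 0)) {a : ℝ} (ha : 0 ≤ a) :
    IntegrableOn (fun t => exp (-a * t) • g t) (Ioi 0) := by
  refine Integrable.bdd_smul hg 1 (by fun_prop) ?_
  filter_upwards [ae_restrict_mem measurableSet_Ioi] with t ht
  rw [norm_of_nonneg (exp_pos _).le, exp_le_one_iff]
  nlinarith [mem_Ioi.1 ht]

lemma exp_neg_mem_Icc {t : ℝ} (ht : 0 < t) : exp (-t) ∈ Icc 0 1 :=
  ⟨(exp_pos _).le, exp_le_one_iff.2 (by linarith)⟩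

lemma integrableOn_comp_exp_neg_smul (hg : IntegrableOn g (Ioi 0)) {F : ℝ → ℝ}
    (hF : ContinuousOn F (Icc 0 1)) : IntegrableOn (fun t => F (exp (-t)) • g t) (Ioi 0) := by
  have hmaps : MapsTo (fun t => exp (-t)) (Ioi 0) (Icc 0 1) := fun t ht => exp_neg_mem_Icc ht
  obtain ⟨C, hC⟩ := isCompact_Icc.exists_bound_of_continuousOn hF
  refine Integrable.bdd_smul hg C ?_ ?_
  · exact (hF.comp (by fun_prop) hmaps).aestronglyMeasurable measurableSet_Ioi
  · filter_upwards [ae_restrict_mem measurableSet_Ioi] with t ht using hC _ (hmaps ht)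

section Moments

variable (hg : IntegrableOn g (Ioi 0))
  (hmom : ∀ n : ℕ, ∫ t in Ioi 0, exp (-t) ^ n • g t = 0)
include hg hmom

lemma integral_eval_exp_neg_smul_eq_zero (p : ℝ[X]) :
    ∫ t in Ioi 0, p.eval (exp (-t)) • g t = 0 := by
  simp_rw [eval_eq_sum_range, Finset.sum_smul, mul_smul]
  rw [integral_finsetSum]
  · exact Finset.sum_eq_zero fun i _ => by rw [integral_smul, hmom, smul_zero]
  · exact fun i _ => (integrableOn_comp_exp_neg_smul hg (continuousOn_pow i)).smul (p.coeff i)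

lemma integral_comp_exp_neg_smul_eq_zero {F : ℝ → ℝ} (hF : ContinuousOn F (Icc 0 1)) :
    ∫ t in Ioi 0, F (exp (-t)) • g t = 0 := by
  set I := ∫ t in Ioi 0, F (exp (-t)) • g t
  have hI : ∀ ε > 0, ‖I‖ ≤ ε * ∫ t in Ioi 0, ‖g t‖ := by
    intro ε hε
    obtain ⟨p, hp⟩ := exists_polynomial_near_of_continuousOn 0 1 F hF ε hε
    have hdiff : I = ∫ t in Ioi 0, (F (exp (-t)) - p.eval (exp (-t))) • g t := by
      simp_rw [sub_smul]
      rw [integral_sub (integrableOn_comp_exp_neg_smul hg hF)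
        (integrableOn_comp_exp_neg_smul hg p.continuous.continuousOn),
        integral_eval_exp_neg_smul_eq_zero hg hmom, sub_zero]
    rw [hdiff, ← integral_const_mul]
    refine norm_integral_le_of_norm_le (hg.norm.const_mul ε) ?_
    filter_upwards [ae_restrict_mem measurableSet_Ioi] with t ht
    rw [norm_smul, norm_eq_abs, abs_sub_comm]
    exact mul_le_mul_of_nonneg_right (hp _ (exp_neg_mem_Icc ht)).le (norm_nonneg _)
  have hlim : Tendsto (fun ε => ε * ∫ t in Ioi 0, ‖g t‖) (𝓝[>] 0) (𝓝 0) := by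
    simpa using ((tendsto_id (x := 𝓝 (0 : ℝ))).mul_const _).mono_left nhdsWithin_le_nhds
  exact norm_le_zero_iff.1 (ge_of_tendsto hlim (eventually_nhdsWithin_of_forall hI))

lemma integral_smul_eq_zero_of_tendsto_atTop_zero {φ : ℝ → ℝ} (hφ : Continuous φ)
    (hφ_lim : Tendsto φ atTop (𝓝 0)) : ∫ t in Ioi 0, φ t • g t = 0 := by
  have hF : Continuous (Function.update (fun x => φ (-log x)) 0 0) := by
    refine continuous_iff_continuousAt.2 fun x => ?_
    rcases eq_or_ne x 0 with rfl | hx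
    · rw [continuousAt_update_same]
      exact hφ_lim.comp (tendsto_neg_atBot_atTop.comp tendsto_log_nhdsNE_zero)
    · rw [continuousAt_update_of_ne hx]
      exact hφ.continuousAt.comp (continuousAt_log hx).neg
  simpa [Function.update, exp_ne_zero] using
    integral_comp_exp_neg_smul_eq_zero hg hmom hF.continuousOn

lemma ae_eq_zero_of_moments_exp_neg_eq_zero [CompleteSpace E] :
    ∀ᵐ t ∂volume.restrict (Ioi 0), g t = 0 :=
  ae_eq_zero_of_integral_contDiff_smul_eq_zero (Integrable.locallyIntegrable hg)
    fun _ hφ hφ_supp => integral_smul_eq_zero_of_tendsto_atTop_zero hg hmom hφ.continuous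
      (hφ_supp.is_zero_at_infty.mono_left atTop_le_cocompact)

end Moments

lemma exp_neg_pow_smul_exp_neg_mul_smul (s t : ℝ) (n : ℕ) (z : ℂ) :
    exp (-t) ^ n • exp (-s * t) • z = Complex.exp (-((s + n : ℝ) : ℂ) * t) * z := by
  rw [smul_smul, ← exp_nat_mul, ← exp_add, Complex.real_smul, Complex.ofReal_exp]
  push_cast
  ring_nf

theorem laplace_injective_general (h : ℝ → ℂ) (M : ℝ)
    (hint : IntegrableOn (fun t => Real.exp (-M * t) • h t) (Set.Ioi 0))
    (hvanish : ∃ s₀ : ℝ, M < s₀ ∧ ∀ s : ℝ, s₀ ≤ s →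
      ∫ t in Set.Ioi (0 : ℝ), Complex.exp (-(s : ℂ) * t) * h t = 0) :
    ∀ᵐ t ∂(volume.restrict (Set.Ioi (0 : ℝ))), h t = 0 := by
  obtain ⟨s₀, hs₀, hvan⟩ := hvanish
  have hg : IntegrableOn (fun t => exp (-s₀ * t) • h t) (Ioi 0) := by
    refine (integrableOn_exp_neg_mul_smul hint (sub_nonneg.2 hs₀.le)).congr_fun
      (fun t _ => ?_) measurableSet_Ioi
    dsimp only
    rw [smul_smul, ← exp_add]
    ring_nf
  have hmom : ∀ n : ℕ, ∫ t in Ioi 0, exp (-t) ^ n • exp (-s₀ * t) • h t = 0 := fun n => by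
    simpa only [exp_neg_pow_smul_exp_neg_mul_smul] using
      hvan (s₀ + n) (le_add_of_nonneg_right n.cast_nonneg)
  filter_upwards [ae_eq_zero_of_moments_exp_neg_eq_zero hg hmom] with t ht
  simpa [exp_ne_zero] using ht

/-- Injectivity of the Laplace transform on exponentially weighted `L¹`: if
`e^(-Mt) h` is integrable on `(0,∞)` and the Laplace transform of `h` vanishes for
all real `s ≥ s₀ > M`, then `h = 0` a.e. on `(0,∞)`. -/
theorem laplace_injective (h : ℝ → ℂ) (hmeas : Measurable h) (M : ℝ) (hM : 0 < M)
    (hint : IntegrableOn (fun t => Real.exp (-M * t) • h t) (Set.Ioi 0))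
    (hvanish : ∃ s₀ : ℝ, M < s₀ ∧ ∀ s : ℝ, s₀ ≤ s →
      ∫ t in Set.Ioi (0 : ℝ), Complex.exp (-(s : ℂ) * t) * h t = 0) :
    ∀ᵐ t ∂(volume.restrict (Set.Ioi (0 : ℝ))), h t = 0 :=
  laplace_injective_general h M hint hvanish
end

section
/- Let 0 < δ < 1, ω = δ/(2−δ), λ₁ > 0, C > 0, and let γ, θ be reals with 0 ≤ γ ≤ θ ≤ γ + 1. Then there exists M > 0 (depending only on δ, λ₁, C, γ, θ) with the following property: whenever λ ≥ λ₁, t > 0, and x, a, b ≥ 0 satisfy (H1) x² ≤ C(a² + λ^{−ω} b²) and (H2) for every τ ∈ [0,1], x² ≤ C(a² + b² λ^{−(τ + (1−τ)ω)} t^{−2τ(1−δ)}), one has λ^θ x² ≤ M·( λ^θ a² + λ^γ b² · t^{−2(1−δ)·max(0, (θ−γ−ω)/(1−ω))} ). (The arithmetic content of Lemma sxl3 part (i).) -/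
open Real Set

/-- Arithmetic content of Lemma sxl3 (i): given the pointwise estimates (H1), (H2),
one gets `λ^θ x² ≤ M (λ^θ a² + λ^γ b² t^(-2(1-δ)[(θ-γ-ω)/(1-ω)]₊))`
uniformly in `λ ≥ λ₁ > 0` and `t > 0`. -/
theorem sxl3_arithmetic (δ ω lam₁ C γ θ : ℝ) (hδ0 : 0 < δ) (hδ1 : δ < 1)
    (hω : ω = δ / (2 - δ)) (hlam₁ : 0 < lam₁) (hC : 0 < C)
    (hγ0 : 0 ≤ γ) (hγθ : γ ≤ θ) (hθ : θ ≤ γ + 1) :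
    ∃ M > 0, ∀ lam : ℝ, lam₁ ≤ lam → ∀ t : ℝ, 0 < t → ∀ x a b : ℝ,
      0 ≤ x → 0 ≤ a → 0 ≤ b →
      x ^ 2 ≤ C * (a ^ 2 + lam ^ (-ω) * b ^ 2) →
      (∀ τ ∈ Set.Icc (0 : ℝ) 1,
        x ^ 2 ≤ C * (a ^ 2 + b ^ 2 * lam ^ (-(τ + (1 - τ) * ω)) * t ^ (-(2 * τ * (1 - δ))))) →
      lam ^ θ * x ^ 2 ≤
        M * (lam ^ θ * a ^ 2 +
          lam ^ γ * b ^ 2 * t ^ (-(2 * (1 - δ) * max 0 ((θ - γ - ω) / (1 - ω))))) := by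
  have h2δ : 0 < 2 - δ := by linarith
  have hω0 : 0 < ω := by rw [hω]; exact div_pos hδ0 h2δ
  have hω1 : ω < 1 := by rw [hω, div_lt_one h2δ]; linarith
  set K : ℝ := max 1 (lam₁ ^ (θ - ω - γ)) with hK
  have hK1 : (1 : ℝ) ≤ K := le_max_left _ _
  have hKe : lam₁ ^ (θ - ω - γ) ≤ K := le_max_right _ _
  have hK0 : 0 < K := lt_of_lt_of_le one_pos hK1
  refine ⟨C * K, mul_pos hC hK0, ?_⟩
  intro lam hlam t ht x a b hx ha hb H1 H2
  have hlam0 : 0 < lam := lt_of_lt_of_le hlam₁ hlam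
  have hθa : (0:ℝ) ≤ lam ^ θ * a ^ 2 := by positivity
  have hγpos : (0:ℝ) < lam ^ γ := rpow_pos_of_pos hlam0 γ
  by_cases hcase : θ - γ - ω ≤ 0
  · -- Case 1: the max is 0; use (H1).
    have hmax : max 0 ((θ - γ - ω) / (1 - ω)) = 0 :=
      max_eq_left (div_nonpos_of_nonpos_of_nonneg hcase (by linarith))
    rw [hmax, mul_zero, neg_zero, rpow_zero, mul_one]
    have key : lam ^ θ * lam ^ (-ω) = lam ^ γ * lam ^ (θ - ω - γ) := by
      rw [← Real.rpow_add hlam0, ← Real.rpow_add hlam0]; ring_nf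
    have hle : lam ^ (θ - ω - γ) ≤ K :=
      le_trans (Real.rpow_le_rpow_of_nonpos hlam₁ hlam (by linarith : θ - ω - γ ≤ 0)) hKe
    have step : lam ^ θ * x ^ 2 ≤
        C * (lam ^ θ * a ^ 2 + lam ^ γ * lam ^ (θ - ω - γ) * b ^ 2) := by
      calc lam ^ θ * x ^ 2 ≤ lam ^ θ * (C * (a ^ 2 + lam ^ (-ω) * b ^ 2)) :=
            mul_le_mul_of_nonneg_left H1 (Real.rpow_nonneg hlam0.le θ)
        _ = C * (lam ^ θ * a ^ 2 + (lam ^ θ * lam ^ (-ω)) * b ^ 2) := by ring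
        _ = C * (lam ^ θ * a ^ 2 + lam ^ γ * lam ^ (θ - ω - γ) * b ^ 2) := by rw [key]
    have hb2 : (0:ℝ) ≤ b ^ 2 := sq_nonneg b
    nlinarith [mul_nonneg hγpos.le hb2, mul_le_mul_of_nonneg_left hle (mul_nonneg hγpos.le hb2),
      mul_le_mul_of_nonneg_left hK1 hθa]
  · -- Case 2: take τ = (θ-γ-ω)/(1-ω) in (H2).
    push_neg at hcase
    have h1ω : (0:ℝ) < 1 - ω := by linarith
    set σ : ℝ := (θ - γ - ω) / (1 - ω) with hσ
    have hσ0 : 0 ≤ σ := le_of_lt (div_pos hcase h1ω)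
    have hσ1 : σ ≤ 1 := by
      rw [hσ, div_le_one h1ω]; linarith
    have hmax : max 0 σ = σ := max_eq_right hσ0
    have hexp : σ + (1 - σ) * ω = θ - γ := by
      have : σ * (1 - ω) = θ - γ - ω := by
        rw [hσ]; field_simp
      linarith [this]
    have H2' := H2 σ ⟨hσ0, hσ1⟩
    rw [hexp] at H2'
    have key : lam ^ θ * lam ^ (-(θ - γ)) = lam ^ γ := by
      rw [← Real.rpow_add hlam0]; ring_nf
    have step : lam ^ θ * x ^ 2 ≤
        C * (lam ^ θ * a ^ 2 + lam ^ γ * b ^ 2 * t ^ (-(2 * σ * (1 - δ)))) := by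
      calc lam ^ θ * x ^ 2
          ≤ lam ^ θ * (C * (a ^ 2 + b ^ 2 * lam ^ (-(θ - γ)) * t ^ (-(2 * σ * (1 - δ))))) :=
            mul_le_mul_of_nonneg_left H2' (Real.rpow_nonneg hlam0.le θ)
        _ = C * (lam ^ θ * a ^ 2 +
              (lam ^ θ * lam ^ (-(θ - γ))) * b ^ 2 * t ^ (-(2 * σ * (1 - δ)))) := by ring
        _ = C * (lam ^ θ * a ^ 2 + lam ^ γ * b ^ 2 * t ^ (-(2 * σ * (1 - δ)))) := by rw [key]
    rw [hmax]
    have hexp2 : -(2 * (1 - δ) * σ) = -(2 * σ * (1 - δ)) := by ring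
    rw [hexp2]
    have htp : (0:ℝ) ≤ lam ^ γ * b ^ 2 * t ^ (-(2 * σ * (1 - δ))) := by positivity
    nlinarith [mul_le_mul_of_nonneg_left hK1 hθa, mul_le_mul_of_nonneg_left hK1 htp]
end
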